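/- arXiv:2205.12068 — 5 statements merged into one kernel-verified Lean document; each statement's English description precedes it below -/
import Mathlib

section
/- Let α ∈ (0,1/2). The quadratic equation αβ(-1/2 + α/3 + β/4) + 1/54 = 0 has a solution β ∈ (0, 2/3) if and only if 1/2 - √6/6 < α < 1/2, and in that case the unique such solution is β = (1 - 2α/3) - √((1 - 2α/3)² - 2/(27α)). -/
/-- For α ∈ (0,1/2), the equation αβ(-1/2 + α/3 + β/4) + 1/54 = 0 has a solution
β ∈ (0,2/3) iff 1/2 - √6/6 < α < 1/2, and then the unique such solution is
β = (1 - 2α/3) - √((1 - 2α/3)² - 2/(27α)). -/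
theorem stmt1 (α : ℝ) (hα0 : 0 < α) (hα1 : α < 1/2) :
    ((∃ β ∈ Set.Ioo (0:ℝ) (2/3), α * β * (-1/2 + α/3 + β/4) + 1/54 = 0) ↔
      (1/2 - Real.sqrt 6 / 6 < α ∧ α < 1/2)) ∧
    (∀ β ∈ Set.Ioo (0:ℝ) (2/3), α * β * (-1/2 + α/3 + β/4) + 1/54 = 0 →
      β = (1 - 2*α/3) - Real.sqrt ((1 - 2*α/3)^2 - 2/(27*α))) := by
  have hαne : α ≠ 0 := ne_of_gt hα0
  set a : ℝ := 1 - 2*α/3 with ha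
  set D : ℝ := a^2 - 2/(27*α) with hD
  have ha23 : 2/3 < a := by rw [ha]; linarith
  have ht : 27 * α * (2/(27*α)) = 2 := by field_simp
  set t : ℝ := 2/(27*α) with htdef
  have ht0 : 0 < t := by rw [htdef]; positivity
  have hDeq : D = a^2 - t := hD
  clear_value t
  clear htdef
  clear_value a D
  have key : ∀ β : ℝ, α * β * (-1/2 + α/3 + β/4) + 1/54 = 0 ↔ (β - a)^2 = D := by
    intro β
    rw [hDeq, ha]
    constructor <;> intro h
    · field_simp at h ⊢
      nlinarith [h, ht]
    · field_simp at h ⊢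
      nlinarith [h, ht]
  have hs : Real.sqrt 6 ^ 2 = 6 := Real.sq_sqrt (by norm_num)
  have hs0 : (0:ℝ) ≤ Real.sqrt 6 := Real.sqrt_nonneg 6
  constructor
  · constructor
    · rintro ⟨β, ⟨hb0, hb2⟩, heq⟩
      refine ⟨?_, hα1⟩
      have hd : (β - a)^2 = D := (key β).1 heq
      rw [hDeq] at hd
      have h1 : (a - 2/3)^2 < a^2 - t := by
        nlinarith [mul_pos (by linarith : (0:ℝ) < 2/3 - β) (by linarith : (0:ℝ) < 2*a - β - 2/3)]
      have h2 : 12*α^2 - 12*α + 1 < 0 := by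
        rw [ha] at h1
        nlinarith [mul_pos hα0 (sub_pos.mpr h1), ht]
      nlinarith [hs, hs0]
    · rintro ⟨hlo, -⟩
      have h2 : 12*α^2 - 12*α + 1 < 0 := by nlinarith [hs, hs0]
      have hD1 : (a - 2/3)^2 < D := by
        rw [hDeq, ha]
        nlinarith [ht, mul_pos hα0 hα0]
      have hDpos : 0 < D := lt_of_le_of_lt (sq_nonneg _) hD1
      have hsD : Real.sqrt D ^ 2 = D := Real.sq_sqrt hDpos.le
      have hsD0 : 0 ≤ Real.sqrt D := Real.sqrt_nonneg D
      have hDlt : D < a^2 := by rw [hDeq]; linarith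
      refine ⟨a - Real.sqrt D, ⟨?_, ?_⟩, ?_⟩
      · have : Real.sqrt D < a := (Real.sqrt_lt' (by linarith)).2 hDlt
        linarith
      · have : a - 2/3 < Real.sqrt D := (Real.lt_sqrt (by linarith)).2 hD1
        linarith
      · rw [key (a - Real.sqrt D)]
        rw [show a - Real.sqrt D - a = -(Real.sqrt D) by ring]
        rw [neg_pow]
        simpa using hsD
  · rintro β ⟨hb0, hb2⟩ heq
    have hd : (β - a)^2 = D := (key β).1 heq
    have hD0 : 0 ≤ D := hd ▸ sq_nonneg _
    have hsq : Real.sqrt D = a - β := by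
      rw [← hd, show (β - a)^2 = (a - β)^2 by ring]
      exact Real.sqrt_sq (by linarith)
    rw [hsq]; ring
end

section
/- If α ∈ (0,1/2), β ∈ (0,2/3) satisfy αβ(-1/2 + α/3 + β/4) + 1/54 = 0, then β satisfies 2/3 - 2√6/9 < β < 2/3. -/
/-- If α ∈ (0,1/2), β ∈ (0,2/3) satisfy αβ(-1/2 + α/3 + β/4) + 1/54 = 0,
then 2/3 - 2√6/9 < β < 2/3. -/
theorem stmt2 (α β : ℝ) (hα : α ∈ Set.Ioo (0:ℝ) (1/2)) (hβ : β ∈ Set.Ioo (0:ℝ) (2/3))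
    (h : α * β * (-1/2 + α/3 + β/4) + 1/54 = 0) :
    2/3 - 2 * Real.sqrt 6 / 9 < β ∧ β < 2/3 := by
  obtain ⟨ha0, ha1⟩ := hα
  obtain ⟨hb0, hb1⟩ := hβ
  refine ⟨?_, hb1⟩
  have h1 : (0:ℝ) < 1/2 - α := by linarith
  have h2 : (0:ℝ) < 1/3 - β/4 - α/3 := by linarith
  have key : β^2/8 - β/6 + 1/54 < 0 := by
    nlinarith [mul_pos hb0 (mul_pos h1 h2)]
  have hs : Real.sqrt 6 ^ 2 = 6 := Real.sq_sqrt (by norm_num)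
  nlinarith [hs, Real.sqrt_nonneg 6, sq_nonneg (β - 2/3 + 2*Real.sqrt 6/9)]
end

section
/- If α ∈ (1/2 - √6/6, 1/2) and β = (1 - 2α/3) - √((1 - 2α/3)² - 2/(27α)), then the product αβ satisfies 0 < αβ < 1/3 - √6/9, and as a function of α it is continuous on this interval. -/
set_option maxHeartbeats 1000000

/-- For α ∈ (1/2 - √6/6, 1/2) and β = (1 - 2α/3) - √((1 - 2α/3)² - 2/(27α)),
the product αβ satisfies 0 < αβ < 1/3 - √6/9, and as a function of α it is
continuous on this interval. -/
theorem stmt3 :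
    (∀ α ∈ Set.Ioo (1/2 - Real.sqrt 6 / 6) (1/2 : ℝ),
      0 < α * ((1 - 2*α/3) - Real.sqrt ((1 - 2*α/3)^2 - 2/(27*α))) ∧
      α * ((1 - 2*α/3) - Real.sqrt ((1 - 2*α/3)^2 - 2/(27*α))) <
        1/3 - Real.sqrt 6 / 9) ∧
    ContinuousOn
      (fun α : ℝ => α * ((1 - 2*α/3) - Real.sqrt ((1 - 2*α/3)^2 - 2/(27*α))))
      (Set.Ioo (1/2 - Real.sqrt 6 / 6) (1/2 : ℝ)) := by
  have hs0 : (0:ℝ) < Real.sqrt 6 := Real.sqrt_pos.2 (by norm_num)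
  have hs : Real.sqrt 6 ^ 2 = 6 := Real.sq_sqrt (by norm_num)
  have hs3 : Real.sqrt 6 < 3 := by nlinarith
  have hs2 : 2 < Real.sqrt 6 := by nlinarith
  constructor
  · intro α hα
    obtain ⟨h1, h2⟩ := hα
    set s := Real.sqrt 6 with hsdef
    have hα0 : 0 < α := by nlinarith
    have hB : 0 < 1 - 2*α/3 := by nlinarith
    have hq : 0 < 12*α^2 - (30+2*s)*α + (14+4*s) := by nlinarith
    have h1' : 0 < α - (1/2 - s/6) := by linarith
    have h2' : 0 < 1/2 - α := by linarith
    have hp : 0 < 12*α^3 - 36*α^2 + 27*α - 2 := by nlinarith [mul_pos h1' hq]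
    have hEeq : α^2 * ((1 - 2*α/3)^2 - 2/(27*α)) = (α*(1-2*α/3))^2 - 2*α/27 := by
      field_simp
    have hE : 0 < (α*(1-2*α/3))^2 - 2*α/27 := by nlinarith [mul_pos hα0 hp]
    have hsqrt : α * Real.sqrt ((1 - 2*α/3)^2 - 2/(27*α))
        = Real.sqrt ((α*(1-2*α/3))^2 - 2*α/27) := by
      rw [← hEeq, Real.sqrt_mul (sq_nonneg α), Real.sqrt_sq hα0.le]
    have hA : 0 < α*(1-2*α/3) := mul_pos hα0 hB
    have hlt : Real.sqrt ((α*(1-2*α/3))^2 - 2*α/27) < α*(1-2*α/3) :=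
      (Real.sqrt_lt' hA).2 (by nlinarith)
    have hrw : α * ((1 - 2*α/3) - Real.sqrt ((1 - 2*α/3)^2 - 2/(27*α)))
        = α*(1-2*α/3) - Real.sqrt ((α*(1-2*α/3))^2 - 2*α/27) := by
      rw [mul_sub, hsqrt]
    have hsE0 : 0 < Real.sqrt ((α*(1-2*α/3))^2 - 2*α/27) := Real.sqrt_pos.2 hE
    constructor
    · rw [hrw]; linarith
    · rw [hrw]
      have hK : 0 < 1/3 - s/9 := by nlinarith
      rcases le_or_gt (α*(1-2*α/3)) (1/3 - s/9) with h | h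
      · linarith
      · have hid : (α*(1-2*α/3) - (1/3 - s/9))^2
            = (α*(1-2*α/3))^2 - 2*α/27
              - (4/3)*(1/3 - s/9)*((α - (1/2 - s/6))*(1/2 - α)) := by
          linear_combination (2/81*α) * hs
        have hsq : (α*(1-2*α/3) - (1/3 - s/9))^2 < (α*(1-2*α/3))^2 - 2*α/27 := by
          have hpr : 0 < (4/3)*(1/3 - s/9)*((α - (1/2 - s/6))*(1/2 - α)) := by
            have := mul_pos h1' h2'
            positivity
          linarith [hid]
        have hfin := Real.lt_sqrt_of_sq_lt hsq
        linarith
  · have hne : ∀ x ∈ Set.Ioo (1/2 - Real.sqrt 6 / 6) (1/2:ℝ), 27*x ≠ 0 := by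
      intro x hx
      have : 0 < x := by nlinarith [hx.1]
      positivity
    apply ContinuousOn.mul continuousOn_id
    apply ContinuousOn.sub (by fun_prop)
    apply Real.continuous_sqrt.comp_continuousOn
    exact ContinuousOn.sub (by fun_prop) (continuousOn_const.div (by fun_prop) hne)
end

section
/- Suppose α ∈ (0,1/2), β ∈ (0,2/3) satisfy αβ(-1/2 + α/3 + β/4) + 1/54 = 0. Then the equation αβγ(-1 + α/2 + 3β/8 + γ/3) + 1/480 = 0, viewed as a quadratic in γ, simplifies to (αβ/3)γ² - (αβ/4 + 1/36)γ + 1/480 = 0, and its smaller root γ = [(αβ/4 + 1/36) - √((αβ/4 + 1/36)² - αβ/360)] / (2αβ/3) lies in (0, 3/4). -/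
/-!
The surface condition says that the volume equation differs from the quadratic
`q γ = (αβ/3) γ² - (αβ/4 + 1/36) γ + 1/480` by `(3/2) γ` times the surface expression.
Since `q (3/4) = -1/48 + 1/480 < 0` for every `αβ`, while the leading coefficient and
`q 0 = 1/480` are positive, the point `3/4` lies strictly between the two roots of `q`
and both roots are positive; hence the smaller root lies in `(0, 3/4)`.
-/

namespace Quadratic

/-- The smaller root of `a x² - b x + c` when `0 < a`. -/
noncomputable def smallerRoot (a b c : ℝ) : ℝ := (b - √(b ^ 2 - 4 * a * c)) / (2 * a)

noncomputable def largerRoot (a b c : ℝ) : ℝ := (b + √(b ^ 2 - 4 * a * c)) / (2 * a)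

variable {a b c : ℝ}

theorem discrim_pos_of_eval_neg (ha : 0 < a) {p : ℝ} (hp : a * p ^ 2 - b * p + c < 0) :
    0 < b ^ 2 - 4 * a * c := by
  have hsq : b ^ 2 - 4 * a * c = (2 * a * p - b) ^ 2 - 4 * a * (a * p ^ 2 - b * p + c) := by
    ring
  rw [hsq]
  nlinarith [sq_nonneg (2 * a * p - b)]

theorem eq_mul_sub_smallerRoot_mul_sub_largerRoot (ha : a ≠ 0) (hd : 0 ≤ b ^ 2 - 4 * a * c)
    (x : ℝ) :
    a * x ^ 2 - b * x + c = a * (x - smallerRoot a b c) * (x - largerRoot a b c) := by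
  have hs := Real.sq_sqrt hd
  unfold smallerRoot largerRoot
  generalize √(b ^ 2 - 4 * a * c) = s at hs
  field_simp
  linear_combination hs

theorem smallerRoot_le_largerRoot (ha : 0 < a) : smallerRoot a b c ≤ largerRoot a b c := by
  unfold smallerRoot largerRoot
  gcongr
  linarith [Real.sqrt_nonneg (b ^ 2 - 4 * a * c)]

theorem eval_smallerRoot (ha : 0 < a) (hd : 0 ≤ b ^ 2 - 4 * a * c) :
    a * smallerRoot a b c ^ 2 - b * smallerRoot a b c + c = 0 := by
  rw [eq_mul_sub_smallerRoot_mul_sub_largerRoot ha.ne' hd]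
  ring

theorem smallerRoot_le_of_eval_eq_zero (ha : 0 < a) (hd : 0 ≤ b ^ 2 - 4 * a * c) {x : ℝ}
    (hx : a * x ^ 2 - b * x + c = 0) : smallerRoot a b c ≤ x := by
  rw [eq_mul_sub_smallerRoot_mul_sub_largerRoot ha.ne' hd] at hx
  rcases mul_eq_zero.1 hx with hx | hx
  · rcases mul_eq_zero.1 hx with h | h
    · exact absurd h ha.ne'
    · linarith
  · linarith [smallerRoot_le_largerRoot (b := b) (c := c) ha]

theorem smallerRoot_lt_of_eval_neg (ha : 0 < a) {p : ℝ} (hp : a * p ^ 2 - b * p + c < 0) :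
    smallerRoot a b c < p := by
  by_contra! hle
  have hle' := hle.trans (smallerRoot_le_largerRoot (b := b) (c := c) ha)
  rw [eq_mul_sub_smallerRoot_mul_sub_largerRoot ha.ne' (discrim_pos_of_eval_neg ha hp).le] at hp
  nlinarith [mul_nonneg (sub_nonneg.2 hle) (sub_nonneg.2 hle')]

theorem smallerRoot_pos (ha : 0 < a) (hb : 0 < b) (hc : 0 < c) : 0 < smallerRoot a b c := by
  have hsqrt : √(b ^ 2 - 4 * a * c) < b := by
    rw [Real.sqrt_lt' hb]
    nlinarith [mul_pos ha hc]
  exact div_pos (by linarith) (by positivity)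

end Quadratic

open Quadratic

theorem volume_orthogonality_iff {α β : ℝ} (hsurf : α * β * (-1/2 + α/3 + β/4) + 1/54 = 0)
    (γ : ℝ) :
    α * β * γ * (-1 + α/2 + 3*β/8 + γ/3) + 1/480 = 0 ↔
      (α*β/3) * γ^2 - (α*β/4 + 1/36) * γ + 1/480 = 0 := by
  constructor <;> intro h
  · linear_combination h - (3/2) * γ * hsurf
  · linear_combination h + (3/2) * γ * hsurf

/-- If α ∈ (0,1/2), β ∈ (0,2/3) satisfy the surface orthogonality condition, then the
volume orthogonality equation in γ is equivalent to
(αβ/3)γ² - (αβ/4 + 1/36)γ + 1/480 = 0, and its smaller root lies in (0,3/4). -/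
theorem stmt4 (α β : ℝ) (hα : α ∈ Set.Ioo (0:ℝ) (1/2)) (hβ : β ∈ Set.Ioo (0:ℝ) (2/3))
    (hsurf : α * β * (-1/2 + α/3 + β/4) + 1/54 = 0) :
    (∀ γ : ℝ, α * β * γ * (-1 + α/2 + 3*β/8 + γ/3) + 1/480 = 0 ↔
      (α*β/3) * γ^2 - (α*β/4 + 1/36) * γ + 1/480 = 0) ∧
    (let γ₀ : ℝ :=
      ((α*β/4 + 1/36) - Real.sqrt ((α*β/4 + 1/36)^2 - α*β/360)) / (2*α*β/3);
      (α*β/3) * γ₀^2 - (α*β/4 + 1/36) * γ₀ + 1/480 = 0 ∧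
      (∀ γ : ℝ, (α*β/3) * γ^2 - (α*β/4 + 1/36) * γ + 1/480 = 0 → γ₀ ≤ γ) ∧
      γ₀ ∈ Set.Ioo (0:ℝ) (3/4)) := by
  refine ⟨volume_orthogonality_iff hsurf, ?_⟩
  intro γ₀
  have hγ₀ : γ₀ = smallerRoot (α*β/3) (α*β/4 + 1/36) (1/480) := by
    simp only [γ₀, smallerRoot]
    ring_nf
  have hαβ : 0 < α*β := mul_pos hα.1 hβ.1
  have ha : 0 < α*β/3 := by positivity
  have hneg : (α*β/3) * (3/4)^2 - (α*β/4 + 1/36) * (3/4) + 1/480 < 0 := by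
    ring_nf; norm_num
  have hd := (discrim_pos_of_eval_neg ha hneg).le
  rw [hγ₀]
  exact ⟨eval_smallerRoot ha hd, fun γ => smallerRoot_le_of_eval_eq_zero ha hd,
    smallerRoot_pos ha (by positivity) (by norm_num), smallerRoot_lt_of_eval_neg ha hneg⟩
end

section
/- Let t₃ = 2/27 - (αβ/4)(1 - β/6) and t₄ = 1/54 - αβ²/12 with α ∈ (0,1/2) and β ∈ (0,2/3). Then 2t₄ > 0, 2t₃ + 3t₄ > 0, and 2t₃ + t₄ > 0, and consequently (2t₃ + 5t₄)² - 4·(2t₄)(2t₃ + 3t₄) ≥ 0 and (2t₃ + 5t₄) - 2√(2t₄(2t₃+3t₄)) > 0, so the open interval of λ defined by 3(2t₃+t₄)²λ² - (2t₃+5t₄)λ + 1/12 < 0 is nonempty. -/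
/-- Positivity of the integral constants t₃, t₄ and nonemptiness of the stability
interval for λ. -/
theorem stmt14 (α β t₃ t₄ : ℝ)
    (hα : α ∈ Set.Ioo (0:ℝ) (1/2)) (hβ : β ∈ Set.Ioo (0:ℝ) (2/3))
    (ht3 : t₃ = 2/27 - (α*β/4) * (1 - β/6)) (ht4 : t₄ = 1/54 - α*β^2/12) :
    0 < 2*t₄ ∧ 0 < 2*t₃ + 3*t₄ ∧ 0 < 2*t₃ + t₄ ∧
    0 ≤ (2*t₃ + 5*t₄)^2 - 4*(2*t₄)*(2*t₃ + 3*t₄) ∧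
    0 < (2*t₃ + 5*t₄) - 2*Real.sqrt (2*t₄*(2*t₃ + 3*t₄)) ∧
    ∃ lam : ℝ, 3*(2*t₃ + t₄)^2 * lam^2 - (2*t₃ + 5*t₄)*lam + 1/12 < 0 := by
  obtain ⟨hα0, hα1⟩ := hα
  obtain ⟨hβ0, hβ1⟩ := hβ
  subst ht3 ht4
  have ha : 0 < 2*((1:ℝ)/54 - α*β^2/12) := by
    nlinarith [mul_pos hα0 hβ0, mul_pos (mul_pos hα0 hβ0) hβ0,
      mul_pos (sub_pos.mpr hα1) (mul_pos hβ0 (sub_pos.mpr hβ1)),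
      mul_pos (sub_pos.mpr hβ1) (sub_pos.mpr hβ1)]
  set t₃ : ℝ := 2/27 - (α*β/4) * (1 - β/6) with ht3
  set t₄ : ℝ := 1/54 - α*β^2/12 with ht4
  have hb : 0 < 2*t₃ + 3*t₄ := by
    rw [ht3, ht4]
    nlinarith [mul_pos hα0 hβ0, mul_pos (mul_pos hα0 hβ0) hβ0,
      mul_pos (sub_pos.mpr hα1) (mul_pos hβ0 (sub_pos.mpr hβ1)),
      mul_pos (mul_pos hα0 hβ0) (sub_pos.mpr hβ1)]
  have hc : 0 < 2*t₃ + t₄ := by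
    rw [ht3, ht4]
    nlinarith [mul_pos (sub_pos.mpr hα1) (sub_pos.mpr hβ1), mul_pos hα0 hβ0]
  have hdisc : 0 ≤ (2*t₃ + 5*t₄)^2 - 4*(2*t₄)*(2*t₃ + 3*t₄) := by nlinarith [sq_nonneg (2*t₄ - (2*t₃ + 3*t₄))]
  have habnn : 0 ≤ 2*t₄*(2*t₃ + 3*t₄) := le_of_lt (mul_pos ha hb)
  set s := Real.sqrt (2*t₄*(2*t₃ + 3*t₄)) with hsdef
  have hs2 : s^2 = 2*t₄*(2*t₃ + 3*t₄) := Real.sq_sqrt habnn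
  have hsnn : 0 ≤ s := Real.sqrt_nonneg _
  have hsqrt : 0 < (2*t₃ + 5*t₄) - 2*s := by
    nlinarith [hs2, hsnn, hc, ha, hb, sq_nonneg (2*t₄ - (2*t₃ + 3*t₄)), mul_pos hc hc]
  refine ⟨ha, hb, hc, hdisc, hsqrt, ⟨(2*t₃ + 5*t₄)/(6*(2*t₃ + t₄)^2), ?_⟩⟩
  have hc2 : (0:ℝ) < (2*t₃ + t₄)^2 := by positivity
  have hkey : 3*(2*t₃ + t₄)^2 * ((2*t₃ + 5*t₄)/(6*(2*t₃ + t₄)^2))^2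
      - (2*t₃ + 5*t₄)*((2*t₃ + 5*t₄)/(6*(2*t₃ + t₄)^2)) + 1/12
      = ((2*t₃ + t₄)^2 - (2*t₃ + 5*t₄)^2)/(12*(2*t₃ + t₄)^2) := by
    field_simp
    ring
  rw [hkey]
  apply div_neg_of_neg_of_pos
  · nlinarith [ha, hc]
  · positivity
end
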